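/- (Theorem 4.5) Consider the island Feynman-Kac model on the weighted product spaces (X_n × ℝ₊)^{N1} built from the ESS particle kernels boldM_{n+1}, the potentials boldG_n((x^1,w^1),…,(x^{N1},w^{N1})) = Σ_i w^i G_n(x^i) / Σ_i w^i, and initial distribution (η_0 ⊗ δ_1)^{⊗N1}: its unnormalized measures are boldΓ_n(F) = E[F(ξ_n) ∏_{0≤p<n} boldG_p(ξ_p)] and boldη_n = boldΓ_n / boldΓ_n(1), for the Markov chain (ξ_n) with these transitions and initial law. Then for any bounded measurable f on X_n and the weighted-average lift F((x^1,w^1),…,(x^{N1},w^{N1})) = Σ_i w^i f(x^i) / Σ_i w^i, one has boldΓ_n(F) = γ_n(f) and boldη_n(F) = η_n(f). -/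

import Mathlib

open MeasureTheory ProbabilityTheory Filter Finset
open scoped ENNReal NNReal Topology Classical

noncomputable section

namespace FKisland

/-- Unnormalized Feynman-Kac measures `γ_n`:
`γ_0 = init` and `γ_{n+1}(f) = γ_n (G_n ⋅ step_{n+1} f)`. -/
def gammaSeq {S : ℕ → Type*} [∀ n, MeasurableSpace (S n)]
    (init : Measure (S 0)) (step : ∀ n, S n → Measure (S (n + 1)))
    (G : ∀ n, S n → ℝ) : (n : ℕ) → Measure (S n)
  | 0 => init
  | n + 1 => ((gammaSeq init step G n).withDensity
      (fun x => ENNReal.ofReal (G n x))).bind (step n)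

/-- Normalized Feynman-Kac measures `η_n = γ_n / γ_n(1)`. -/
def etaSeq {S : ℕ → Type*} [∀ n, MeasurableSpace (S n)]
    (init : Measure (S 0)) (step : ∀ n, S n → Measure (S (n + 1)))
    (G : ∀ n, S n → ℝ) (n : ℕ) : Measure (S n) :=
  (gammaSeq init step G n Set.univ)⁻¹ • gammaSeq init step G n

/-- Feynman-Kac semigroup `Q_{p,p+k} = Q_{p+1} Q_{p+2} ⋯ Q_{p+k}` acting on functions,
where `Q_{l+1} g (x) = G_l(x) ∫ g(y) step_l(x,dy)`. -/
def Qop {S : ℕ → Type*} [∀ n, MeasurableSpace (S n)]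
    (step : ∀ n, S n → Measure (S (n + 1))) (G : ∀ n, S n → ℝ) :
    (p k : ℕ) → (S (p + k) → ℝ) → S p → ℝ
  | _, 0, f => f
  | p, k + 1, f => Qop step G p k (fun x => G (p + k) x * ∫ y, f y ∂(step (p + k) x))

/-- `Q_{p,n}` for `p ≤ n`. -/
def Qle {S : ℕ → Type*} [∀ n, MeasurableSpace (S n)]
    (step : ∀ n, S n → Measure (S (n + 1))) (G : ∀ n, S n → ℝ)
    {p n : ℕ} (h : p ≤ n) (f : S n → ℝ) : S p → ℝ :=
  Qop step G p (n - p) (fun y => f (cast (congrArg S (Nat.add_sub_cancel' h)) y))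

/-- Normalized semigroup `Q̄_{p,p+k} = Q_{p,p+k} / η_p(Q_{p,p+k} 1)`. -/
def Qbar {S : ℕ → Type*} [∀ n, MeasurableSpace (S n)]
    (init : Measure (S 0)) (step : ∀ n, S n → Measure (S (n + 1)))
    (G : ∀ n, S n → ℝ) (p k : ℕ) (f : S (p + k) → ℝ) : S p → ℝ :=
  fun x => Qop step G p k f x /
    ∫ z, Qop step G p k (fun _ => (1 : ℝ)) z ∂(etaSeq init step G p)

/-- Normalized semigroup `Q̄_{p,n}` for `p ≤ n`. -/
def Qbarle {S : ℕ → Type*} [∀ n, MeasurableSpace (S n)]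
    (init : Measure (S 0)) (step : ∀ n, S n → Measure (S (n + 1)))
    (G : ∀ n, S n → ℝ) {p n : ℕ} (h : p ≤ n) (f : S n → ℝ) : S p → ℝ :=
  fun x => Qle step G h f x /
    ∫ z, Qle step G h (fun _ => (1 : ℝ)) z ∂(etaSeq init step G p)

/-- Boltzmann-Gibbs transformation `Ψ(μ)(dx) = G(x) μ(dx) / μ(G)`. -/
def boltzmannGibbs {α : Type*} [MeasurableSpace α] (G : α → ℝ) (μ : Measure α) :
    Measure α :=
  (∫⁻ x, ENNReal.ofReal (G x) ∂μ)⁻¹ • μ.withDensity fun x => ENNReal.ofReal (G x)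

/-- One bootstrap selection/mutation step (`boldM_{n+1}`): each of the `N` new particles is
drawn independently from the mixture `Σ_j G(x^j) M(x^j, ⋅) / Σ_k G(x^k)`. -/
def bootStep {α β : Type*} [MeasurableSpace α] [MeasurableSpace β]
    (M : α → Measure β) (G : α → ℝ) {N : ℕ} (x : Fin N → α) :
    Measure (Fin N → β) :=
  Measure.pi fun _ : Fin N =>
    (∑ k, ENNReal.ofReal (G (x k)))⁻¹ • ∑ j, ENNReal.ofReal (G (x j)) • M (x j)

/-- ε-bootstrap selection kernel
`S_{n,μ}(x, ⋅) = ε G(x) δ_x + (1 - ε G(x)) Ψ(μ)`. -/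
def epsSelect {α : Type*} [MeasurableSpace α]
    (G : α → ℝ) (ε : ℝ) (μ : Measure α) (x : α) : Measure α :=
  ENNReal.ofReal (ε * G x) • Measure.dirac x
    + ENNReal.ofReal (1 - ε * G x) • boltzmannGibbs G μ

/-- Empirical measure of a configuration. -/
def empMeasure {α : Type*} [MeasurableSpace α] {N : ℕ} (x : Fin N → α) : Measure α :=
  (N : ℝ≥0∞)⁻¹ • ∑ i, Measure.dirac (x i)

/-- One ε-bootstrap particle step: coordinate `i` moves with `S_{n, m(x)} M` started at `x^i`. -/
def epsBootStep {α β : Type*} [MeasurableSpace α] [MeasurableSpace β]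
    (M : α → Measure β) (G : α → ℝ) (ε : ℝ) {N : ℕ} (x : Fin N → α) :
    Measure (Fin N → β) :=
  Measure.pi fun i : Fin N => (epsSelect G ε (empMeasure x) (x i)).bind M

/-- One ESS particle step on weighted configurations: if the effective sample size
`(Σ w G)² / Σ (wG)²` is at least `a N`, keep the particles (mutating them) and multiply the
weights by the potential; otherwise resample multinomially and reset all weights to 1. -/
def essStep {α β : Type*} [MeasurableSpace α] [MeasurableSpace β]
    (M : α → Measure β) (G : α → ℝ) (a : ℝ) {N : ℕ} (xw : Fin N → α × ℝ) :
    Measure (Fin N → β × ℝ) :=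
  if (∑ i, (xw i).2 * G (xw i).1) ^ 2 / (∑ i, ((xw i).2 * G (xw i).1) ^ 2) ≥ a * N then
    Measure.pi fun i : Fin N => (M (xw i).1).map fun y => (y, (xw i).2 * G (xw i).1)
  else
    Measure.pi fun _ : Fin N =>
      ((∑ k, ENNReal.ofReal ((xw k).2 * G (xw k).1))⁻¹ •
          ∑ j, ENNReal.ofReal ((xw j).2 * G (xw j).1) • M (xw j).1).map
        fun y => (y, (1 : ℝ))

/-- The process `ξ` on the time-varying state spaces `S n` is a Markov chain with initial
law `init` and transition steps `step`, characterized through products of bounded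
measurable functionals of the path. -/
def IsMarkovApprox {Ω : Type*} [MeasurableSpace Ω] (P : Measure Ω)
    {S : ℕ → Type*} [∀ n, MeasurableSpace (S n)]
    (init : Measure (S 0)) (step : ∀ n, S n → Measure (S (n + 1)))
    (ξ : ∀ n, Ω → S n) : Prop :=
  (∀ n, Measurable (ξ n)) ∧
  P.map (ξ 0) = init ∧
  ∀ (n : ℕ) (F : ∀ p, S p → ℝ),
    (∀ p, Measurable (F p)) → (∀ p, ∃ C, ∀ x, |F p x| ≤ C) →
    ∀ (H : S (n + 1) → ℝ), Measurable H → (∃ C, ∀ x, |H x| ≤ C) →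
      ∫ ω, (∏ p ∈ Finset.range (n + 1), F p (ξ p ω)) * H (ξ (n + 1) ω) ∂P
        = ∫ ω, (∏ p ∈ Finset.range (n + 1), F p (ξ p ω)) *
            ∫ y, H y ∂(step n (ξ n ω)) ∂P

/-- Bootstrap local sampling errors `W_p^{N1}` along a configuration path `ξ`:
`W_0^{N1}(g) = √N1 (η_0^{N1}(g) - η_0(g))` and for `p ≥ 1`,
`W_p^{N1}(g) = √N1 (η_p^{N1}(g) - Φ_p(η_{p-1}^{N1})(g))` with `Φ_p(μ) = Ψ_{p-1}(μ) M_p`. -/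
def localW {X : ℕ → Type*} [∀ n, MeasurableSpace (X n)]
    (η0 : Measure (X 0)) (M : ∀ n, Kernel (X n) (X (n + 1))) (G : ∀ n, X n → ℝ)
    (N1 : ℕ) (ξ : ∀ p, Fin N1 → X p) : (p : ℕ) → (X p → ℝ) → ℝ
  | 0, g => Real.sqrt N1 * (((N1 : ℝ)⁻¹ * ∑ i, g (ξ 0 i)) - ∫ x, g x ∂η0)
  | p + 1, g => Real.sqrt N1 * (((N1 : ℝ)⁻¹ * ∑ i, g (ξ (p + 1) i))
      - (∑ i, G p (ξ p i) * ∫ y, g y ∂(M p (ξ p i))) / ∑ i, G p (ξ p i))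

end FKisland

/-!
The weighted-average lift `F = Σ wⁱ f(xⁱ) / Σ wⁱ` intertwines one ESS transition with the
Feynman-Kac operator `Q f = G · M f`: for a configuration with positive weights,
`boldG(c) · boldM(F)(c) = Σ wⁱ G(xⁱ) M f(xⁱ) / Σ wⁱ`, whichever branch is taken. If the ESS
is large, the new weights are `wⁱ G(xⁱ)` and the positions move by `M`; otherwise all weights are
reset to `1` and every particle is drawn from the `w G`-mixture of the `M(xⁱ, ·)`, whose mean is
the same ratio. Since the weights stay positive along the chain, the Markov property and
induction on `n` give `boldΓ_n(F) = γ_n(f)`; taking `f = 1`, for which `F = 1`, identifies the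
normalizing constants, whence `boldη_n(F) = η_n(f)`.
-/

namespace FKisland

section WeightedConfigurations

variable {α β : Type*} {N : ℕ}

def posWeights (α : Type*) (N : ℕ) : Set (Fin N → α × ℝ) := {c | ∀ i, 0 < (c i).2}

def weightedAvg (f : α → ℝ) (c : Fin N → α × ℝ) : ℝ :=
  (∑ i, (c i).2 * f (c i).1) / ∑ i, (c i).2

lemma measurableSet_posWeights [MeasurableSpace α] : MeasurableSet (posWeights α N) := by
  simp only [posWeights, Set.ofPred_forall]
  exact .iInter fun i => measurableSet_lt measurable_const (by fun_prop)

lemma measurable_weightedAvg [MeasurableSpace α] {f : α → ℝ} (hf : Measurable f) :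
    Measurable (weightedAvg (N := N) f) := by
  unfold weightedAvg; fun_prop

lemma sum_weights_pos (hN : 0 < N) {c : Fin N → α × ℝ} (hc : c ∈ posWeights α N) :
    0 < ∑ i, (c i).2 :=
  Finset.sum_pos (fun i _ => hc i) ⟨⟨0, hN⟩, Finset.mem_univ _⟩

lemma sum_weights_mul_pos (hN : 0 < N) {G : α → ℝ} (hG : ∀ x, 0 < G x)
    {c : Fin N → α × ℝ} (hc : c ∈ posWeights α N) : 0 < ∑ i, (c i).2 * G (c i).1 :=
  Finset.sum_pos (fun i _ => mul_pos (hc i) (hG _)) ⟨⟨0, hN⟩, Finset.mem_univ _⟩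

lemma weightedAvg_one (hN : 0 < N) {c : Fin N → α × ℝ} (hc : c ∈ posWeights α N) :
    weightedAvg (fun _ => (1 : ℝ)) c = 1 := by
  simp only [weightedAvg, mul_one]
  exact div_self (sum_weights_pos hN hc).ne'

lemma abs_weightedAvg_le {f : α → ℝ} {C : ℝ} (hC : ∀ x, |f x| ≤ C)
    {c : Fin N → α × ℝ} (hc : c ∈ posWeights α N) : |weightedAvg f c| ≤ max C 0 := by
  rcases N.eq_zero_or_pos with rfl | hN
  · simp [weightedAvg]
  have hW := sum_weights_pos hN hc
  rw [weightedAvg, abs_div, abs_of_pos hW, div_le_iff₀ hW]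
  calc |∑ i, (c i).2 * f (c i).1| ≤ ∑ i, |(c i).2 * f (c i).1| := abs_sum_le_sum_abs _ _
    _ ≤ ∑ i, (c i).2 * max C 0 := by
        refine Finset.sum_le_sum fun i _ => ?_
        rw [abs_mul, abs_of_pos (hc i)]
        exact mul_le_mul_of_nonneg_left ((hC _).trans (le_max_left _ _)) (hc i).le
    _ = max C 0 * ∑ i, (c i).2 := by rw [← Finset.sum_mul, mul_comm]

lemma abs_indicator_weightedAvg_le {f : α → ℝ} {C : ℝ} (hC : ∀ x, |f x| ≤ C)
    (c : Fin N → α × ℝ) : |(posWeights α N).indicator (weightedAvg f) c| ≤ max C 0 := by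
  by_cases hc : c ∈ posWeights α N
  · rw [Set.indicator_of_mem hc]
    exact abs_weightedAvg_le hC hc
  · simp [Set.indicator_of_notMem hc]

lemma weightedAvg_mul_reweighted (hN : 0 < N) {G : α → ℝ} (hG : ∀ x, 0 < G x)
    (g : α → ℝ) {c : Fin N → α × ℝ} (hc : c ∈ posWeights α N) :
    weightedAvg G c * ((∑ i, (c i).2 * G (c i).1 * g (c i).1) / ∑ i, (c i).2 * G (c i).1)
      = weightedAvg (fun x => G x * g x) c := by
  simp only [weightedAvg, ← mul_assoc]
  rw [div_mul_div_comm, mul_comm (∑ i, (c i).2),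
    mul_div_mul_left _ _ (sum_weights_mul_pos hN hG hc).ne']

variable [MeasurableSpace α] [MeasurableSpace β]

lemma measurePreserving_pi_prodMk_const (ν : Fin N → Measure β)
    [∀ i, IsProbabilityMeasure (ν i)] (v : Fin N → ℝ) :
    MeasurePreserving (fun (y : Fin N → β) i => (y i, v i))
      (Measure.pi ν) (Measure.pi fun i => (ν i).map fun y => (y, v i)) :=
  measurePreserving_pi _ _ fun _ => ⟨measurable_id.prodMk measurable_const, rfl⟩

lemma integral_indicator_weightedAvg_pi_map (ν : Fin N → Measure β)
    [∀ i, IsProbabilityMeasure (ν i)] {v : Fin N → ℝ} (hv : ∀ i, 0 < v i)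
    {f : β → ℝ} (hf : Measurable f) {C : ℝ} (hC : ∀ x, |f x| ≤ C) :
    ∫ d, (posWeights β N).indicator (weightedAvg f) d
        ∂(Measure.pi fun i => (ν i).map fun y => (y, v i))
      = (∑ i, v i * ∫ y, f y ∂ν i) / ∑ i, v i := by
  have hmp := measurePreserving_pi_prodMk_const ν v
  have hint : ∀ i, Integrable (fun y : Fin N → β => f (y i)) (Measure.pi ν) := fun i =>
    Integrable.of_bound (hf.comp (measurable_pi_apply i)).aestronglyMeasurable C
      (ae_of_all _ fun y => hC (y i))
  rw [← hmp.map_eq, integral_map hmp.measurable.aemeasurable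
    ((measurable_weightedAvg hf).indicator measurableSet_posWeights).aestronglyMeasurable]
  have hpos : ∀ y : Fin N → β, (fun i => (y i, v i)) ∈ posWeights β N := fun _ => hv
  simp only [Set.indicator_of_mem (hpos _), weightedAvg]
  rw [integral_div, integral_finsetSum _ fun i _ => (hint i).const_mul (v i)]
  simp only [integral_const_mul,
    integral_comp_eval (X := fun _ => β) (μ := ν) hf.aestronglyMeasurable]

lemma integral_indicator_weightedAvg_pi_map_one (hN : 0 < N) (ν : Measure β)
    [IsProbabilityMeasure ν] {f : β → ℝ} (hf : Measurable f) {C : ℝ} (hC : ∀ x, |f x| ≤ C) :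
    ∫ d, (posWeights β N).indicator (weightedAvg f) d
        ∂(Measure.pi fun _ : Fin N => ν.map fun y => (y, (1 : ℝ)))
      = ∫ y, f y ∂ν := by
  rw [integral_indicator_weightedAvg_pi_map (fun _ => ν) (fun _ => one_pos) hf hC]
  simp only [one_mul, sum_const, card_univ, Fintype.card_fin, nsmul_eq_mul, mul_one]
  exact mul_div_cancel_left₀ _ (Nat.cast_ne_zero.mpr hN.ne')

lemma ae_mem_posWeights_pi_map (ν : Fin N → Measure β) [∀ i, IsProbabilityMeasure (ν i)]
    {v : Fin N → ℝ} (hv : ∀ i, 0 < v i) :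
    ∀ᵐ d ∂(Measure.pi fun i => (ν i).map fun y => (y, v i)), d ∈ posWeights β N := by
  have hmp := measurePreserving_pi_prodMk_const ν v
  rw [← hmp.map_eq]
  exact (ae_map_iff hmp.measurable.aemeasurable measurableSet_posWeights).mpr
    (ae_of_all _ fun _ => hv)

end WeightedConfigurations

section Mixture

variable {ι β : Type*} [Fintype ι] [MeasurableSpace β]

lemma isProbabilityMeasure_mixture {w : ι → ℝ} (hw : ∀ i, 0 ≤ w i) (hpos : 0 < ∑ i, w i)
    (μ : ι → Measure β) [∀ i, IsProbabilityMeasure (μ i)] :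
    IsProbabilityMeasure ((∑ k, ENNReal.ofReal (w k))⁻¹ • ∑ j, ENNReal.ofReal (w j) • μ j) := by
  have hT : ∑ k, ENNReal.ofReal (w k) = ENNReal.ofReal (∑ k, w k) :=
    (ENNReal.ofReal_sum_of_nonneg fun i _ => hw i).symm
  constructor
  simp only [Measure.smul_apply, Measure.coe_finsetSum, Finset.sum_apply, measure_univ,
    smul_eq_mul, mul_one]
  rw [hT]
  exact ENNReal.inv_mul_cancel (ENNReal.ofReal_pos.mpr hpos).ne' ENNReal.ofReal_ne_top

lemma integral_mixture {w : ι → ℝ} (hw : ∀ i, 0 ≤ w i) (μ : ι → Measure β) {f : β → ℝ}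
    (hf : ∀ i, Integrable f (μ i)) :
    ∫ y, f y ∂((∑ k, ENNReal.ofReal (w k))⁻¹ • ∑ j, ENNReal.ofReal (w j) • μ j)
      = (∑ j, w j * ∫ y, f y ∂μ j) / ∑ j, w j := by
  rw [integral_smul_measure, integral_finsetSum_measure fun j _ =>
    (hf j).smul_measure ENNReal.ofReal_ne_top, ← ENNReal.ofReal_sum_of_nonneg fun i _ => hw i,
    ENNReal.toReal_inv, ENNReal.toReal_ofReal (Finset.sum_nonneg fun i _ => hw i),
    smul_eq_mul, inv_mul_eq_div]
  simp only [integral_smul_measure, ENNReal.toReal_ofReal (hw _), smul_eq_mul]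

end Mixture

section EssStep

variable {α β : Type*} [MeasurableSpace α] [MeasurableSpace β]
  (M : α → Measure β) [∀ x, IsProbabilityMeasure (M x)] {G : α → ℝ} (a : ℝ) {N : ℕ}

lemma integral_indicator_weightedAvg_essStep (hG : ∀ x, 0 < G x) (hN : 0 < N) {f : β → ℝ}
    (hf : Measurable f) {C : ℝ} (hC : ∀ y, |f y| ≤ C)
    {c : Fin N → α × ℝ} (hc : c ∈ posWeights α N) :
    ∫ d, (posWeights β N).indicator (weightedAvg f) d ∂essStep M G a c
      = (∑ i, (c i).2 * G (c i).1 * ∫ y, f y ∂M (c i).1) / ∑ i, (c i).2 * G (c i).1 := by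
  have hwG : ∀ i, 0 < (c i).2 * G (c i).1 := fun i => mul_pos (hc i) (hG _)
  rw [essStep]
  split_ifs
  · exact integral_indicator_weightedAvg_pi_map (fun i => M (c i).1) hwG hf hC
  · have := isProbabilityMeasure_mixture (fun i => (hwG i).le)
      (sum_weights_mul_pos hN hG hc) fun i => M (c i).1
    rw [integral_indicator_weightedAvg_pi_map_one hN _ hf hC]
    exact integral_mixture (fun i => (hwG i).le) _ fun i =>
      Integrable.of_bound hf.aestronglyMeasurable C (ae_of_all _ hC)

lemma ae_mem_posWeights_essStep (hG : ∀ x, 0 < G x) (hN : 0 < N)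
    {c : Fin N → α × ℝ} (hc : c ∈ posWeights α N) :
    ∀ᵐ d ∂essStep M G a c, d ∈ posWeights β N := by
  have hwG : ∀ i, 0 < (c i).2 * G (c i).1 := fun i => mul_pos (hc i) (hG _)
  rw [essStep]
  split_ifs
  · exact ae_mem_posWeights_pi_map (fun i => M (c i).1) hwG
  · have := isProbabilityMeasure_mixture (fun i => (hwG i).le)
      (sum_weights_mul_pos hN hG hc) fun i => M (c i).1
    exact ae_mem_posWeights_pi_map _ fun _ => one_pos

end EssStep

section FeynmanKac

lemma integral_etaSeq {S : ℕ → Type*} [∀ n, MeasurableSpace (S n)] (init : Measure (S 0))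
    (step : ∀ n, S n → Measure (S (n + 1))) (G : ∀ n, S n → ℝ) (n : ℕ)
    (f : S n → ℝ) :
    ∫ x, f x ∂etaSeq init step G n
      = (∫ x, f x ∂gammaSeq init step G n) / ∫ _, (1 : ℝ) ∂gammaSeq init step G n := by
  rw [etaSeq, integral_smul_measure, integral_const, smul_eq_mul, smul_eq_mul, mul_one,
    ENNReal.toReal_inv, inv_mul_eq_div, measureReal_def]

variable {α β : Type*} [MeasurableSpace α] [MeasurableSpace β] (μ : Measure α)
  [IsFiniteMeasure μ]

lemma isFiniteMeasure_withDensity_ofReal_of_le {g : α → ℝ} {C : ℝ} (hg : ∀ x, g x ≤ C) :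
    IsFiniteMeasure (μ.withDensity fun x => ENNReal.ofReal (g x)) :=
  isFiniteMeasure_withDensity <| ne_top_of_le_ne_top
    (by simp [lintegral_const, ENNReal.mul_eq_top, measure_ne_top])
    (lintegral_mono fun x => ENNReal.ofReal_le_ofReal (hg x))

lemma integral_bind_withDensity_ofReal (κ : Kernel α β) [IsMarkovKernel κ] {g : α → ℝ}
    (hg : Measurable g) (hg0 : ∀ x, 0 ≤ g x) {D : ℝ} (hgD : ∀ x, g x ≤ D)
    {f : β → ℝ} (hf : Measurable f) {C : ℝ} (hC : ∀ y, |f y| ≤ C) :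
    ∫ y, f y ∂((μ.withDensity fun x => ENNReal.ofReal (g x)).bind (κ ·))
      = ∫ x, g x * ∫ y, f y ∂κ x ∂μ := by
  have := isFiniteMeasure_withDensity_ofReal_of_le μ hgD
  rw [Measure.comp_eq_comp_const_apply, Kernel.integral_comp
      (Integrable.of_bound hf.aestronglyMeasurable C (ae_of_all _ hC)),
    Kernel.const_apply, integral_withDensity_eq_integral_toReal_smul (by fun_prop)
      (ae_of_all _ fun _ => ENNReal.ofReal_lt_top)]
  simp only [ENNReal.toReal_ofReal (hg0 _), smul_eq_mul]

variable {S : ℕ → Type*} [∀ n, MeasurableSpace (S n)] {init : Measure (S 0)}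
  {M : ∀ n, Kernel (S n) (S (n + 1))} [∀ n, IsMarkovKernel (M n)] {G : ∀ n, S n → ℝ}

lemma isFiniteMeasure_gammaSeq [IsFiniteMeasure init] (hG : ∀ n, ∃ C, ∀ x, G n x ≤ C)
    (n : ℕ) :
    IsFiniteMeasure (gammaSeq init (fun k x => M k x) G n) := by
  induction n with
  | zero => assumption
  | succ n ih =>
    obtain ⟨C, hC⟩ := hG n
    have := isFiniteMeasure_withDensity_ofReal_of_le (gammaSeq init (fun k x => M k x) G n) hC
    exact inferInstanceAs (IsFiniteMeasure (M n ∘ₘ _))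

lemma integral_gammaSeq_succ [IsFiniteMeasure init] (hGm : ∀ n, Measurable (G n))
    (hG : ∀ n, ∃ C, ∀ x, G n x ≤ C) (hG0 : ∀ n x, 0 ≤ G n x) (n : ℕ)
    {f : S (n + 1) → ℝ} (hf : Measurable f) {C : ℝ} (hC : ∀ y, |f y| ≤ C) :
    ∫ y, f y ∂gammaSeq init (fun k x => M k x) G (n + 1)
      = ∫ x, G n x * ∫ y, f y ∂M n x ∂gammaSeq init (fun k x => M k x) G n := by
  have := isFiniteMeasure_gammaSeq (init := init) (M := M) hG n
  obtain ⟨D, hD⟩ := hG n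
  exact integral_bind_withDensity_ofReal _ (M n) (hGm n) (hG0 n) hD hf hC

end FeynmanKac

section Chain

variable {Ω : Type*} [MeasurableSpace Ω] {P : Measure Ω} [IsFiniteMeasure P]

lemma IsMarkovApprox.ae_mem_succ {S : ℕ → Type*} [∀ n, MeasurableSpace (S n)]
    {init : Measure (S 0)} {step : ∀ n, S n → Measure (S (n + 1))} {ξ : ∀ n, Ω → S n}
    (hξ : IsMarkovApprox P init step ξ)
    {n : ℕ} {s : Set (S (n + 1))} (hs : MeasurableSet s)
    (h : ∀ᵐ ω ∂P, ∀ᵐ y ∂step n (ξ n ω), y ∈ s) :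
    ∀ᵐ ω ∂P, ξ (n + 1) ω ∈ s := by
  have hmarkov := hξ.2.2 n (fun _ _ => 1) (fun _ => measurable_const)
    (fun _ => ⟨1, fun _ => by simp⟩) (sᶜ.indicator 1) (measurable_const.indicator hs.compl)
    ⟨1, fun y => by by_cases hy : y ∈ sᶜ <;> simp [hy]⟩
  simp only [prod_const_one, one_mul, integral_indicator_one hs.compl] at hmarkov
  have hnull : P.real (ξ (n + 1) ⁻¹' sᶜ) = 0 := by
    rw [← integral_indicator_one ((hξ.1 (n + 1)) hs.compl)]
    refine hmarkov.trans (integral_eq_zero_of_ae (h.mono fun ω hω => ?_))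
    exact congrArg ENNReal.toReal (ae_iff.mp hω)
  exact ae_iff.mpr ((measureReal_eq_zero_iff).mp hnull)

lemma IsMarkovApprox.ae_mem_posWeights {X : ℕ → Type*} [∀ n, MeasurableSpace (X n)] {N : ℕ}
    {init : Measure (Fin N → X 0 × ℝ)}
    {M : ∀ n, X n → Measure (X (n + 1))} [∀ n x, IsProbabilityMeasure (M n x)]
    {G : ∀ n, X n → ℝ} {a : ℝ} {ξ : ∀ n, Ω → Fin N → X n × ℝ}
    (hξ : IsMarkovApprox (S := fun n => Fin N → X n × ℝ) P init
      (fun k c => essStep (M k) (G k) a c) ξ)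
    (hinit : ∀ᵐ c ∂init, c ∈ posWeights (X 0) N) (hG : ∀ n x, 0 < G n x) (hN : 0 < N) (n : ℕ) :
    ∀ᵐ ω ∂P, ξ n ω ∈ posWeights (X n) N := by
  induction n with
  | zero => exact ae_of_ae_map (hξ.1 0).aemeasurable (hξ.2.1 ▸ hinit)
  | succ n ih =>
    exact hξ.ae_mem_succ measurableSet_posWeights
      (ih.mono fun ω hω => ae_mem_posWeights_essStep (M n) a (hG n) hN hω)

variable {X : ℕ → Type*} [∀ n, MeasurableSpace (X n)] {η0 : Measure (X 0)}
  [IsProbabilityMeasure η0] {M : ∀ n, Kernel (X n) (X (n + 1))} [∀ n, IsMarkovKernel (M n)]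
  {G : ∀ n, X n → ℝ} {a : ℝ} {N : ℕ} {ξ : ∀ n, Ω → Fin N → X n × ℝ}

/- The Markov property of `ξ` may only be tested against bounded functionals; the weighted
average is bounded on configurations with positive weights, which carry the whole law. -/
lemma integral_weightedAvg_mul_prod_succ
    (hξ : IsMarkovApprox (S := fun n => Fin N → X n × ℝ) P
      (Measure.pi fun _ : Fin N => η0.map fun x0 => (x0, (1 : ℝ)))
      (fun k c => essStep (fun x => M k x) (G k) a c) ξ)
    (hGm : ∀ n, Measurable (G n)) (hG : ∀ n, ∃ C, ∀ x, G n x ≤ C) (hGpos : ∀ n x, 0 < G n x)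
    (hN : 0 < N) (n : ℕ) {f : X (n + 1) → ℝ} (hf : Measurable f) {C : ℝ}
    (hC : ∀ x, |f x| ≤ C) :
    ∫ ω, weightedAvg f (ξ (n + 1) ω) * ∏ p ∈ range (n + 1), weightedAvg (G p) (ξ p ω) ∂P
      = ∫ ω, weightedAvg (fun x => G n x * ∫ y, f y ∂M n x) (ξ n ω)
          * ∏ p ∈ range n, weightedAvg (G p) (ξ p ω) ∂P := by
  have hpos : ∀ᵐ ω ∂P, ∀ p, ξ p ω ∈ posWeights (X p) N := ae_all_iff.mpr
    (hξ.ae_mem_posWeights (ae_mem_posWeights_pi_map _ fun _ => one_pos) hGpos hN)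
  have hGabs : ∀ p, ∃ D, ∀ x, |G p x| ≤ D := fun p => (hG p).imp fun D hD x => by
    rw [abs_of_pos (hGpos p x)]; exact hD x
  have hmarkov := hξ.2.2 n (fun p => (posWeights (X p) N).indicator (weightedAvg (G p)))
    (fun p => (measurable_weightedAvg (hGm p)).indicator measurableSet_posWeights)
    (fun p => (hGabs p).elim fun _ hD => ⟨_, abs_indicator_weightedAvg_le hD⟩)
    ((posWeights (X (n + 1)) N).indicator (weightedAvg f))
    ((measurable_weightedAvg hf).indicator measurableSet_posWeights)
    ⟨_, abs_indicator_weightedAvg_le hC⟩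
  calc ∫ ω, weightedAvg f (ξ (n + 1) ω) * ∏ p ∈ range (n + 1), weightedAvg (G p) (ξ p ω) ∂P
      = ∫ ω, (∏ p ∈ range (n + 1), (posWeights (X p) N).indicator (weightedAvg (G p)) (ξ p ω))
          * (posWeights (X (n + 1)) N).indicator (weightedAvg f) (ξ (n + 1) ω) ∂P := by
        refine integral_congr_ae (hpos.mono fun ω hω => ?_)
        simp only [Set.indicator_of_mem (hω _)]
        exact mul_comm _ _
    _ = ∫ ω, (∏ p ∈ range (n + 1), (posWeights (X p) N).indicator (weightedAvg (G p)) (ξ p ω))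
          * ∫ d, (posWeights (X (n + 1)) N).indicator (weightedAvg f) d
              ∂essStep (fun x => M n x) (G n) a (ξ n ω) ∂P := hmarkov
    _ = ∫ ω, weightedAvg (fun x => G n x * ∫ y, f y ∂M n x) (ξ n ω)
          * ∏ p ∈ range n, weightedAvg (G p) (ξ p ω) ∂P := by
        refine integral_congr_ae (hpos.mono fun ω hω => ?_)
        simp only [prod_range_succ, Set.indicator_of_mem (hω _),
          integral_indicator_weightedAvg_essStep _ a (hGpos n) hN hf hC (hω n)]
        rw [← weightedAvg_mul_reweighted hN (hGpos n) _ (hω n)]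
        ring

lemma integral_weightedAvg_zero
    (hξ : IsMarkovApprox (S := fun n => Fin N → X n × ℝ) P
      (Measure.pi fun _ : Fin N => η0.map fun x0 => (x0, (1 : ℝ)))
      (fun k c => essStep (fun x => M k x) (G k) a c) ξ)
    (hGpos : ∀ n x, 0 < G n x) (hN : 0 < N) {f : X 0 → ℝ} (hf : Measurable f) {C : ℝ}
    (hC : ∀ x, |f x| ≤ C) :
    ∫ ω, weightedAvg f (ξ 0 ω) ∂P = ∫ x, f x ∂η0 := by
  have hlaw : ∫ d, (posWeights (X 0) N).indicator (weightedAvg f) d ∂P.map (ξ 0)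
      = ∫ x, f x ∂η0 := by
    rw [hξ.2.1]; exact integral_indicator_weightedAvg_pi_map_one hN η0 hf hC
  rw [integral_map (hξ.1 0).aemeasurable
    ((measurable_weightedAvg hf).indicator measurableSet_posWeights).aestronglyMeasurable] at hlaw
  refine (integral_congr_ae ?_).trans hlaw
  filter_upwards [hξ.ae_mem_posWeights (ae_mem_posWeights_pi_map _ fun _ => one_pos) hGpos hN 0]
    with ω hω
  rw [Set.indicator_of_mem hω]

theorem integral_weightedAvg_mul_prod_eq_gammaSeq
    (hξ : IsMarkovApprox (S := fun n => Fin N → X n × ℝ) P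
      (Measure.pi fun _ : Fin N => η0.map fun x0 => (x0, (1 : ℝ)))
      (fun k c => essStep (fun x => M k x) (G k) a c) ξ)
    (hGm : ∀ n, Measurable (G n)) (hG : ∀ n, ∃ C, ∀ x, G n x ≤ C) (hGpos : ∀ n x, 0 < G n x)
    (hN : 0 < N) (n : ℕ) {f : X n → ℝ} (hf : Measurable f) {C : ℝ} (hC : ∀ x, |f x| ≤ C) :
    ∫ ω, weightedAvg f (ξ n ω) * ∏ p ∈ range n, weightedAvg (G p) (ξ p ω) ∂P
      = ∫ x, f x ∂gammaSeq η0 (fun k x => M k x) G n := by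
  induction n generalizing C with
  | zero =>
    simp only [range_zero, prod_empty, mul_one]
    exact integral_weightedAvg_zero hξ hGpos hN hf hC
  | succ n ih =>
    obtain ⟨D, hD⟩ := hG n
    have hQf : ∀ x, |G n x * ∫ y, f y ∂M n x| ≤ D * C := fun x => by
      rw [abs_mul, abs_of_pos (hGpos n x)]
      refine mul_le_mul (hD x) ?_ (abs_nonneg _) ((hGpos n x).le.trans (hD x))
      simpa using norm_integral_le_of_norm_le_const (μ := M n x)
        (ae_of_all _ fun y => (Real.norm_eq_abs (f y)).trans_le (hC y))
    rw [integral_weightedAvg_mul_prod_succ hξ hGm hG hGpos hN n hf hC,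
      ih (f := fun x => G n x * ∫ y, f y ∂M n x)
        ((hGm n).mul hf.stronglyMeasurable.integral_kernel.measurable) hQf,
      integral_gammaSeq_succ hGm hG (fun n x => (hGpos n x).le) n hf hC]

end Chain

end FKisland

open FKisland
theorem statement13_general {X : ℕ → Type*} [∀ n, MeasurableSpace (X n)]
    (η0 : Measure (X 0)) [IsProbabilityMeasure η0]
    (M : ∀ n, Kernel (X n) (X (n + 1))) [∀ n, IsMarkovKernel (M n)]
    (G : ∀ n, X n → ℝ)
    (hGmeas : ∀ n, Measurable (G n))
    (hGbdd : ∀ n, ∃ C, ∀ x, G n x ≤ C)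
    (hGpos : ∀ n x, 0 < G n x)
    (a : ℝ)
    {Ω : Type*} [MeasurableSpace Ω] (P : Measure Ω) [IsProbabilityMeasure P]
    {N1 : ℕ} (hN1 : 1 ≤ N1)
    (ξ : ∀ p, Ω → (Fin N1 → X p × ℝ))
    (hchain : IsMarkovApprox (S := fun p => Fin N1 → X p × ℝ) P
      (Measure.pi fun _ : Fin N1 => η0.map fun x0 => (x0, (1 : ℝ)))
      (fun k x => essStep (fun c => M k c) (G k) a x) ξ)
    (n : ℕ) (f : X n → ℝ) (hf : Measurable f) (hfb : ∃ C, ∀ x, |f x| ≤ C) :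
    (∫ ω, ((∑ i, (ξ n ω i).2 * f (ξ n ω i).1) / ∑ i, (ξ n ω i).2) *
        ∏ p ∈ Finset.range n,
          ((∑ i, (ξ p ω i).2 * G p (ξ p ω i).1) / ∑ i, (ξ p ω i).2) ∂P
      = ∫ x, f x ∂(gammaSeq (S := X) η0 (fun k x => M k x) G n))
    ∧ (∫ ω, ((∑ i, (ξ n ω i).2 * f (ξ n ω i).1) / ∑ i, (ξ n ω i).2) *
          ∏ p ∈ Finset.range n,
            ((∑ i, (ξ p ω i).2 * G p (ξ p ω i).1) / ∑ i, (ξ p ω i).2) ∂P) /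
        (∫ ω, ∏ p ∈ Finset.range n,
            ((∑ i, (ξ p ω i).2 * G p (ξ p ω i).1) / ∑ i, (ξ p ω i).2) ∂P)
      = ∫ x, f x ∂(etaSeq (S := X) η0 (fun k x => M k x) G n) := by
  obtain ⟨C, hC⟩ := hfb
  have hΓ : ∫ ω, weightedAvg f (ξ n ω) * ∏ p ∈ range n, weightedAvg (G p) (ξ p ω) ∂P
      = ∫ x, f x ∂gammaSeq η0 (fun k x => M k x) G n :=
    integral_weightedAvg_mul_prod_eq_gammaSeq hchain hGmeas hGbdd hGpos hN1 n hf hC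
  have hΓ1 : ∫ ω, ∏ p ∈ range n, weightedAvg (G p) (ξ p ω) ∂P
      = ∫ _, (1 : ℝ) ∂gammaSeq η0 (fun k x => M k x) G n := by
    rw [← integral_weightedAvg_mul_prod_eq_gammaSeq hchain hGmeas hGbdd hGpos hN1 n
      measurable_const (C := 1) fun _ => abs_one.le]
    refine integral_congr_ae ((hchain.ae_mem_posWeights (ae_mem_posWeights_pi_map _
      fun _ => one_pos) hGpos hN1 n).mono fun ω hω => ?_)
    simp only [weightedAvg_one hN1 hω, one_mul]
  exact ⟨hΓ, by rw [integral_etaSeq, ← hΓ, ← hΓ1]; rfl⟩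

/-- **Theorem 4.5.** For the island Feynman-Kac model on weighted
configurations built from the ESS particle transitions, the potentials
`boldG_n(x,w) = Σ_i w^i G_n(x^i) / Σ_i w^i` and initial law `(η_0 ⊗ δ_1)^{⊗N1}`, and for
the weighted-average lift `F(x,w) = Σ_i w^i f(x^i) / Σ_i w^i`:
`boldΓ_n(F) = γ_n(f)` and `boldη_n(F) = η_n(f)`. -/
theorem statement13 {X : ℕ → Type*} [∀ n, MeasurableSpace (X n)]
    (η0 : Measure (X 0)) [IsProbabilityMeasure η0]
    (M : ∀ n, Kernel (X n) (X (n + 1))) [∀ n, IsMarkovKernel (M n)]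
    (G : ∀ n, X n → ℝ)
    (hGmeas : ∀ n, Measurable (G n))
    (hGbdd : ∀ n, ∃ C, ∀ x, G n x ≤ C)
    (hGpos : ∀ n x, 0 < G n x)
    (a : ℝ) (ha : a ∈ Set.Ioo (0 : ℝ) 1)
    {Ω : Type*} [MeasurableSpace Ω] (P : Measure Ω) [IsProbabilityMeasure P]
    {N1 : ℕ} (hN1 : 1 ≤ N1)
    (ξ : ∀ p, Ω → (Fin N1 → X p × ℝ))
    (hchain : IsMarkovApprox (S := fun p => Fin N1 → X p × ℝ) P
      (Measure.pi fun _ : Fin N1 => η0.map fun x0 => (x0, (1 : ℝ)))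
      (fun k x => essStep (fun c => M k c) (G k) a x) ξ)
    (n : ℕ) (f : X n → ℝ) (hf : Measurable f) (hfb : ∃ C, ∀ x, |f x| ≤ C) :
    (∫ ω, ((∑ i, (ξ n ω i).2 * f (ξ n ω i).1) / ∑ i, (ξ n ω i).2) *
        ∏ p ∈ Finset.range n,
          ((∑ i, (ξ p ω i).2 * G p (ξ p ω i).1) / ∑ i, (ξ p ω i).2) ∂P
      = ∫ x, f x ∂(gammaSeq (S := X) η0 (fun k x => M k x) G n))
    ∧ (∫ ω, ((∑ i, (ξ n ω i).2 * f (ξ n ω i).1) / ∑ i, (ξ n ω i).2) *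
          ∏ p ∈ Finset.range n,
            ((∑ i, (ξ p ω i).2 * G p (ξ p ω i).1) / ∑ i, (ξ p ω i).2) ∂P) /
        (∫ ω, ∏ p ∈ Finset.range n,
            ((∑ i, (ξ p ω i).2 * G p (ξ p ω i).1) / ∑ i, (ξ p ω i).2) ∂P)
      = ∫ x, f x ∂(etaSeq (S := X) η0 (fun k x => M k x) G n) :=
  statement13_general η0 M G hGmeas hGbdd hGpos a P hN1 ξ hchain n f hf hfb
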